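/- arXiv:2008.08986 — 5 statements merged into one kernel-verified Lean document; each statement's English description precedes it below -/
import Mathlib

section
/- Let q be an integer with q ≠ 1 and let B = BS(1,q) = ⟨a, b ∣ b a b⁻¹ = a^q⟩ be the solvable Baumslag–Solitar group. If φ : B → Q is a surjective group homomorphism onto a proper quotient Q (i.e. φ has nontrivial kernel), then the image φ(a) or the image φ(b) has finite order in Q. -/
/-- Relators of the Baumslag–Solitar group BS(1,q) = ⟨a, b ∣ b a b⁻¹ = a^q⟩,
with `a = FreeGroup.of false` and `b = FreeGroup.of true`. -/
def BSrels (q : ℤ) : Set (FreeGroup Bool) :=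
  {FreeGroup.of true * FreeGroup.of false * (FreeGroup.of true)⁻¹ * (FreeGroup.of false) ^ (-q)}

/-- The Baumslag–Solitar group BS(1,q). -/
def BS (q : ℤ) : Type := PresentedGroup (BSrels q)

instance (q : ℤ) : Group (BS q) := by unfold BS; infer_instance

/-- The generator `a` of BS(1,q). -/
def BSa (q : ℤ) : BS q := PresentedGroup.of false

/-- The generator `b` of BS(1,q). -/
def BSb (q : ℤ) : BS q := PresentedGroup.of true

/-!
The relation `b a^s b⁻¹ = a^(q s)` lets one move powers of `b` past powers of `a`, so every
element of BS(1,q), and hence every nontrivial element `w` of `ker φ`, has the form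
`b^(-r) a^s b^t`. In `Q` this gives `φ(a)^s = φ(b)^(r-t)`. If `s = 0` then `r ≠ t` because
`w ≠ 1`, so `φ(b)` has finite order. Otherwise `φ(a)^s` is a power of `φ(b)` and so commutes
with `φ(b)`, while conjugation by `φ(b)` sends it to `φ(a)^(q s)`; hence
`φ(a)^((q-1) s) = 1` with `(q-1) s ≠ 0`.
-/

section ConjEqZPow

variable {G : Type*} [Group G] {x y : G} {q : ℤ}

theorem pow_mul_zpow_of_conj_eq_zpow (h : y * x * y⁻¹ = x ^ q) (k : ℕ) (s : ℤ) :
    y ^ k * x ^ s = x ^ (q ^ k * s) * y ^ k := by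
  induction k generalizing s with
  | zero => simp
  | succ k ih =>
    have hs : y * x ^ s = x ^ (q * s) * y := by
      rw [← mul_inv_eq_iff_eq_mul, ← conj_zpow, h, ← zpow_mul]
    rw [pow_succ, mul_assoc, hs, ← mul_assoc, ih, mul_assoc, pow_succ, mul_assoc (q ^ k)]

theorem exists_normalForm_mul (h : y * x * y⁻¹ = x ^ q) (r t r' t' : ℕ) (s s' : ℤ) :
    ∃ (r'' t'' : ℕ) (s'' : ℤ), (y ^ r)⁻¹ * x ^ s * y ^ t * ((y ^ r')⁻¹ * x ^ s' * y ^ t') =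
      (y ^ r'')⁻¹ * x ^ s'' * y ^ t'' := by
  rcases le_total r' t with hle | hle
  · obtain ⟨d, rfl⟩ := Nat.exists_eq_add_of_le hle
    refine ⟨r, d + t', s + q ^ d * s', ?_⟩
    calc _ = (y ^ r)⁻¹ * x ^ s * (y ^ d * x ^ s') * y ^ t' := by group
      _ = (y ^ r)⁻¹ * x ^ s * (x ^ (q ^ d * s') * y ^ d) * y ^ t' := by
        rw [pow_mul_zpow_of_conj_eq_zpow h]
      _ = _ := by group
  · obtain ⟨d, rfl⟩ := Nat.exists_eq_add_of_le hle
    refine ⟨d + r, t', q ^ d * s + s', ?_⟩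
    calc _ = (y ^ r)⁻¹ * (y ^ d)⁻¹ * (y ^ d * x ^ s) * (y ^ d)⁻¹ * x ^ s' * y ^ t' := by group
      _ = (y ^ r)⁻¹ * (y ^ d)⁻¹ * (x ^ (q ^ d * s) * y ^ d) * (y ^ d)⁻¹ * x ^ s' * y ^ t' := by
        rw [pow_mul_zpow_of_conj_eq_zpow h]
      _ = _ := by group

theorem exists_normalForm_of_mem_closure (h : y * x * y⁻¹ = x ^ q) {g : G}
    (hg : g ∈ Subgroup.closure {x, y}) :
    ∃ (r t : ℕ) (s : ℤ), g = (y ^ r)⁻¹ * x ^ s * y ^ t := by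
  induction hg using Subgroup.closure_induction with
  | mem g hg =>
    rcases hg with rfl | rfl
    · exact ⟨0, 0, 1, by simp⟩
    · exact ⟨0, 1, 0, by simp⟩
  | one => exact ⟨0, 0, 0, by simp⟩
  | mul g g' _ _ ih ih' =>
    obtain ⟨r, t, s, rfl⟩ := ih
    obtain ⟨r', t', s', rfl⟩ := ih'
    exact exists_normalForm_mul h r t r' t' s s'
  | inv g _ ih =>
    obtain ⟨r, t, s, rfl⟩ := ih
    exact ⟨t, r, -s, by group⟩

theorem isOfFinOrder_of_zpow_eq_zpow_of_conj_eq_zpow (h : y * x * y⁻¹ = x ^ q) (hq : q ≠ 1)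
    {s n : ℤ} (hs : s ≠ 0) (hxy : x ^ s = y ^ n) : IsOfFinOrder x := by
  have hfix : x ^ (q * s) = x ^ s :=
    calc x ^ (q * s) = y * x ^ s * y⁻¹ := by rw [← conj_zpow, h, zpow_mul]
      _ = x ^ s := by rw [hxy]; group
  refine isOfFinOrder_iff_zpow_eq_one.mpr ⟨(q - 1) * s, mul_ne_zero (sub_ne_zero.mpr hq) hs, ?_⟩
  rw [sub_mul, one_mul, zpow_sub, hfix, mul_inv_cancel]

end ConjEqZPow

namespace BS

theorem rel (q : ℤ) : BSb q * BSa q * (BSb q)⁻¹ = BSa q ^ q := by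
  have h : PresentedGroup.mk (BSrels q)
      (FreeGroup.of true * FreeGroup.of false * (FreeGroup.of true)⁻¹ *
        FreeGroup.of false ^ (-q)) = 1 :=
    PresentedGroup.one_of_mem rfl
  rwa [map_mul, map_zpow, zpow_neg, mul_inv_eq_one] at h

theorem mem_closure_BSa_BSb (q : ℤ) (g : BS q) : g ∈ Subgroup.closure {BSa q, BSb q} := by
  refine PresentedGroup.generated_by _ _ (fun j => Subgroup.subset_closure ?_) g
  cases j
  · exact Or.inl rfl
  · exact Or.inr rfl

theorem exists_normalForm (q : ℤ) (g : BS q) :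
    ∃ (r t : ℕ) (s : ℤ), g = (BSb q ^ r)⁻¹ * BSa q ^ s * BSb q ^ t :=
  exists_normalForm_of_mem_closure (rel q) (mem_closure_BSa_BSb q g)

end BS

theorem stmt0_general {q : ℤ} (hq : q ≠ 1) {Q : Type*} [Group Q]
    (φ : BS q →* Q) (hker : φ.ker ≠ ⊥) :
    IsOfFinOrder (φ (BSa q)) ∨ IsOfFinOrder (φ (BSb q)) := by
  obtain ⟨w, hw, hw1⟩ := φ.ker.bot_or_exists_ne_one.resolve_left hker
  obtain ⟨r, t, s, rfl⟩ := BS.exists_normalForm q w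
  have hrel : φ (BSb q) * φ (BSa q) * (φ (BSb q))⁻¹ = φ (BSa q) ^ q := by
    simpa using congrArg φ (BS.rel q)
  have hword : (φ (BSb q) ^ r)⁻¹ * φ (BSa q) ^ s * φ (BSb q) ^ t = 1 := by
    simpa using hw
  have hxy : φ (BSa q) ^ s = φ (BSb q) ^ ((r : ℤ) - t) :=
    calc φ (BSa q) ^ s
        = φ (BSb q) ^ r * ((φ (BSb q) ^ r)⁻¹ * φ (BSa q) ^ s * φ (BSb q) ^ t) *
            (φ (BSb q) ^ t)⁻¹ := by group
      _ = φ (BSb q) ^ ((r : ℤ) - t) := by rw [hword]; group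
  rcases eq_or_ne s 0 with rfl | hs
  · have hrt : (r : ℤ) - t ≠ 0 := by
      intro hrt
      obtain rfl : r = t := by omega
      exact hw1 (by simp)
    exact Or.inr (isOfFinOrder_iff_zpow_eq_one.mpr ⟨_, hrt, by rw [← hxy, zpow_zero]⟩)
  · exact Or.inl (isOfFinOrder_of_zpow_eq_zpow_of_conj_eq_zpow hrel hq hs hxy)

theorem stmt0 {q : ℤ} (hq : q ≠ 1) {Q : Type*} [Group Q]
    (φ : BS q →* Q) (hsurj : Function.Surjective φ) (hker : φ.ker ≠ ⊥) :
    IsOfFinOrder (φ (BSa q)) ∨ IsOfFinOrder (φ (BSb q)) :=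
  stmt0_general hq φ hker
end

section
/- A torsion-free group that is virtually infinite cyclic (i.e. contains a finite-index subgroup isomorphic to ℤ) and is nontrivial is isomorphic to ℤ. -/
/-- The Mathlib (Dec 2024) definition, since removed: a monoid is torsion-free if no
element except `1` has finite order. -/
def Monoid.IsTorsionFree (G : Type*) [Monoid G] : Prop :=
  ∀ g : G, g ≠ 1 → ¬IsOfFinOrder g

/-!
The normal core `N` of the infinite cyclic subgroup is again infinite cyclic of finite index, so
every `g` conjugates a generator `z` of `N` to `z` or `z⁻¹`. Inversion is impossible: some power
`g ^ n ≠ 1` lies in `N` and commutes with `g`, while `g` inverts every element of `N`. Hence `N`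
is central, the centre has finite index, and the transfer `g ↦ g ^ [G : Z(G)]`, injective by
torsion-freeness, embeds `G` into an abelian group. Finally `g ↦ g ^ [G : H]` embeds the abelian
group `G` into `H ≅ ℤ`, so `G` is infinite cyclic.
-/

open Subgroup

theorem conj_eq_self_or_inv_of_normal_zpowers {G : Type*} [Group G] {z : G}
    (hz : ¬IsOfFinOrder z) [hN : (zpowers z).Normal] (g : G) :
    g * z * g⁻¹ = z ∨ g * z * g⁻¹ = z⁻¹ := by
  obtain ⟨m, hm⟩ := mem_zpowers_iff.mp (hN.conj_mem z (mem_zpowers z) g)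
  obtain ⟨l, hl⟩ := mem_zpowers_iff.mp (hN.conj_mem z (mem_zpowers z) g⁻¹)
  have hlm : l * m = 1 := injective_zpow_iff_not_isOfFinOrder.mpr hz <|
    calc z ^ (l * m) = (g⁻¹ * z * g⁻¹⁻¹) ^ m := by rw [zpow_mul, hl]
      _ = g⁻¹ * (g * z * g⁻¹) * g := by rw [conj_zpow, hm, inv_inv]
      _ = z ^ (1 : ℤ) := by group
  rcases Int.eq_one_or_neg_one_of_mul_eq_one (mul_comm l m ▸ hlm) with rfl | rfl
  · exact .inl (by simpa using hm.symm)
  · exact .inr (by simpa using hm.symm)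

namespace Monoid.IsTorsionFree

theorem eq_one_of_pow_eq_one {M : Type*} [Monoid M] (htf : Monoid.IsTorsionFree M) {g : M}
    {n : ℕ} (hn : n ≠ 0) (h : g ^ n = 1) : g = 1 := by
  by_contra hg
  exact htf g hg (isOfFinOrder_iff_pow_eq_one.mpr ⟨n, Nat.pos_of_ne_zero hn, h⟩)

variable {G : Type*} [Group G]

theorem conj_ne_inv (htf : Monoid.IsTorsionFree G) {g z : G} (hz : z ≠ 1) {n : ℕ} (hn : n ≠ 0)
    (hgn : g ^ n ∈ zpowers z) : g * z * g⁻¹ ≠ z⁻¹ := by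
  intro hinv
  obtain ⟨a, ha⟩ := mem_zpowers_iff.mp hgn
  have hsymm : z ^ a = (z ^ a)⁻¹ :=
    calc z ^ a = g * z ^ a * g⁻¹ := by rw [ha]; group
      _ = (g * z * g⁻¹) ^ a := conj_zpow.symm
      _ = (z ^ a)⁻¹ := by rw [hinv, inv_zpow]
  have hza : z ^ a = 1 :=
    htf.eq_one_of_pow_eq_one two_ne_zero (by rw [sq, ← mul_eq_one_iff_eq_inv.mpr hsymm])
  have hg : g = 1 := htf.eq_one_of_pow_eq_one hn (ha ▸ hza)
  refine hz (htf.eq_one_of_pow_eq_one two_ne_zero ?_)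
  rw [hg, one_mul, inv_one, mul_one] at hinv
  rw [sq, ← mul_eq_one_iff_eq_inv.mpr hinv]

theorem zpowers_le_center (htf : Monoid.IsTorsionFree G) {z : G} [(zpowers z).Normal]
    [(zpowers z).FiniteIndex] : zpowers z ≤ center G := by
  refine zpowers_le.mpr (mem_center_iff.mpr fun g => ?_)
  by_cases hz : z = 1
  · simp [hz]
  have hconj : g * z * g⁻¹ = z :=
    (conj_eq_self_or_inv_of_normal_zpowers (htf z hz) g).resolve_right
      (htf.conj_ne_inv hz FiniteIndex.index_ne_zero (pow_index_mem _ g))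
  exact mul_inv_eq_iff_eq_mul.mp hconj

theorem le_center_of_isCyclic (htf : Monoid.IsTorsionFree G) (N : Subgroup G) [N.Normal]
    [N.FiniteIndex] [hN : IsCyclic N] : N ≤ center G := by
  obtain ⟨z, rfl⟩ := (N.isCyclic_iff_exists_zpowers_eq_top).mp hN
  exact htf.zpowers_le_center

theorem isMulCommutative_of_finiteIndex_center (htf : Monoid.IsTorsionFree G)
    [(center G).FiniteIndex] : IsMulCommutative G := by
  have hinj : Function.Injective (MonoidHom.transferCenterPow G) :=
    (injective_iff_map_eq_one _).mpr fun g hg =>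
      htf.eq_one_of_pow_eq_one FiniteIndex.index_ne_zero <| by
        simpa [MonoidHom.transferCenterPow_apply] using congrArg Subtype.val hg
  exact .of_comm fun a b => hinj (by rw [map_mul, map_mul, mul_comm'])

open scoped IsMulCommutative in
theorem isCyclic_of_finiteIndex [IsMulCommutative G] (htf : Monoid.IsTorsionFree G)
    (H : Subgroup G) [H.FiniteIndex] [IsCyclic H] : IsCyclic G := by
  let f : G →* H := (powMonoidHom H.index).codRestrict H (pow_index_mem H)
  refine isCyclic_of_injective f ((injective_iff_map_eq_one f).mpr fun g hg => ?_)
  exact htf.eq_one_of_pow_eq_one FiniteIndex.index_ne_zero (congrArg Subtype.val hg)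

end Monoid.IsTorsionFree

theorem stmt2_general {G : Type*} [Group G] (htf : Monoid.IsTorsionFree G)
    (hvz : ∃ H : Subgroup G, H.index ≠ 0 ∧ Nonempty (H ≃* Multiplicative ℤ)) :
    Nonempty (G ≃* Multiplicative ℤ) := by
  obtain ⟨H, hidx, ⟨e⟩⟩ := hvz
  have : H.FiniteIndex := ⟨hidx⟩
  have : IsCyclic H := e.symm.isCyclic.mp inferInstance
  have : Infinite G := Infinite.of_injective _ (Subtype.val_injective.comp e.symm.injective)
  have : IsCyclic H.normalCore := isCyclic_of_le H.normalCore_le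
  have : (center G).FiniteIndex := finiteIndex_of_le (htf.le_center_of_isCyclic H.normalCore)
  have : IsMulCommutative G := htf.isMulCommutative_of_finiteIndex_center
  have : IsCyclic G := htf.isCyclic_of_finiteIndex H
  exact ⟨intCyclicMulEquiv.symm⟩

theorem stmt2 {G : Type*} [Group G] (htf : Monoid.IsTorsionFree G) (hnt : Nontrivial G)
    (hvz : ∃ H : Subgroup G, H.index ≠ 0 ∧ Nonempty (H ≃* Multiplicative ℤ)) :
    Nonempty (G ≃* Multiplicative ℤ) :=
  stmt2_general htf hvz
end

section
/- Let G be a group in which the derived subgroup [G,G] is the normal closure of a single element g of order dividing 2. Then there is no surjective group homomorphism from G onto the infinite dihedral group ℤ/2 * ℤ/2. -/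
/-!
Realise `ℤ/2 * ℤ/2` on the concrete infinite dihedral group `DihedralGroup 0`, where the two
generators go to the reflections `sr 0` and `sr 1`. A homomorphism out of `G` sends `g` into the
derived subgroup, which lies in the kernel of the sign and so consists of translations `r i`; as
`ℤ` is torsion-free, the image of `g` is trivial. Then the whole derived subgroup `⟨⟨g⟩⟩` dies,
so the image of `G` is abelian, whereas `sr 0` and `sr 1` do not commute.
-/

/-- The infinite dihedral group as the free product ℤ/2 * ℤ/2. -/
abbrev Dinf : Type := Monoid.Coprod (Multiplicative (ZMod 2)) (Multiplicative (ZMod 2))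

open DihedralGroup

def zmodTwoHom {P : Type*} [Group P] (e : P) (he : e ^ 2 = 1) : Multiplicative (ZMod 2) →* P :=
  AddMonoidHom.toMultiplicativeLeft <| ZMod.lift 2
    ⟨zmultiplesHom _ (Additive.ofMul e), by rw [zmultiplesHom_apply, ← ofMul_zpow]; simp [he]⟩

@[simp] lemma zmodTwoHom_ofAdd_one {P : Type*} [Group P] (e : P) (he : e ^ 2 = 1) :
    zmodTwoHom e he (Multiplicative.ofAdd 1) = e := by
  change Additive.toMul (ZMod.lift 2 _ ((1 : ℤ) : ZMod 2)) = e
  rw [ZMod.lift_coe]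
  simp

theorem commute_map_of_commutator_eq_normalClosure {G H : Type*} [Group G] [Group H]
    {g : G} (hg : g ^ 2 = 1) (hG : commutator G = Subgroup.normalClosure {g}) (f : G →* H)
    (hH : ∀ x ∈ commutator H, x ^ 2 = 1 → x = 1) (u v : G) : Commute (f u) (f v) := by
  have hfg : f g = 1 := by
    have hgG : g ∈ commutator G := hG ▸ Subgroup.subset_normalClosure rfl
    refine hH _ ?_ (by rw [← map_pow, hg, map_one])
    exact Subgroup.commutator_mono le_top le_top
      (map_commutator_eq (G := G) f ▸ Subgroup.mem_map_of_mem f hgG)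
  have hker : commutator G ≤ f.ker := hG ▸ Subgroup.normalClosure_le_normal (by simpa using hfg)
  rw [← commutatorElement_eq_one_iff_commute, ← map_commutatorElement]
  exact hker (Subgroup.commutator_mem_commutator (Subgroup.mem_top u) (Subgroup.mem_top v))

namespace DihedralGroup

def sign {n : ℕ} : DihedralGroup n →* Multiplicative (ZMod 2) where
  toFun
    | r _ => 1
    | sr _ => Multiplicative.ofAdd 1
  map_one' := rfl
  map_mul' := by
    rintro (i | i) (j | j) <;> simp only [r_mul_r, r_mul_sr, sr_mul_r, sr_mul_sr] <;> decide

lemma eq_one_of_mem_commutator_of_sq_eq_one {x : DihedralGroup 0}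
    (hx : x ∈ commutator (DihedralGroup 0)) (hx2 : x ^ 2 = 1) : x = 1 := by
  cases x with
  | r i =>
    rw [r_pow, one_def, r.injEq] at hx2
    rw [one_def, r.injEq]
    simpa using hx2
  | sr i =>
    have hsign : sign (sr i) = 1 := Abelianization.commutator_subset_ker sign hx
    change Multiplicative.ofAdd (1 : ZMod 2) = 1 at hsign
    exact absurd hsign (by decide)

lemma not_commute_sr_zero_sr_one : ¬Commute (sr 0 : DihedralGroup 0) (sr 1) := by
  simp [commute_iff_eq, sr_mul_sr]

end DihedralGroup

def Dinf.toDihedralGroup : Dinf →* DihedralGroup 0 :=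
  Monoid.Coprod.lift (zmodTwoHom (sr 0) (by rw [sq, sr_mul_self]))
    (zmodTwoHom (sr 1) (by rw [sq, sr_mul_self]))

theorem stmt7 {G : Type*} [Group G] (g : G) (hg : g ^ 2 = 1)
    (hG : commutator G = Subgroup.normalClosure {g}) :
    ¬∃ φ : G →* Dinf, Function.Surjective φ := by
  rintro ⟨φ, hφ⟩
  obtain ⟨u, hu⟩ := hφ (Monoid.Coprod.inl (Multiplicative.ofAdd 1))
  obtain ⟨v, hv⟩ := hφ (Monoid.Coprod.inr (Multiplicative.ofAdd 1))
  have hcomm := commute_map_of_commutator_eq_normalClosure hg hG (Dinf.toDihedralGroup.comp φ)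
    (fun _ => DihedralGroup.eq_one_of_mem_commutator_of_sq_eq_one) u v
  exact DihedralGroup.not_commute_sr_zero_sr_one
    (by simpa [hu, hv, Dinf.toDihedralGroup] using hcomm)
end

section
/- Let G be a group and let a, b ∈ G satisfy b·a·b⁻¹ = a^{-8}, so that the subgroup L = ⟨a, b⟩ of G is a quotient of BS(1,−8) = ⟨a,b ∣ bab⁻¹ = a⁻⁸⟩; if the images of both a and b in L have infinite order, then L ≅ BS(1,−8). -/
/-! Affine group over ℚ : (u, r) represents x ↦ u x + r -/
@[ext] structure Aff : Type where
  u : ℚˣ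
  r : ℚ

instance : Mul Aff := ⟨fun x y => ⟨x.u * y.u, x.r + (x.u : ℚ) * y.r⟩⟩
instance : One Aff := ⟨⟨1, 0⟩⟩
instance : Inv Aff := ⟨fun x => ⟨x.u⁻¹, -((x.u⁻¹ : ℚˣ) : ℚ) * x.r⟩⟩
@[simp] lemma Aff.mk_mul (u v : ℚˣ) (r s : ℚ) :
    (⟨u, r⟩ * ⟨v, s⟩ : Aff) = ⟨u * v, r + (u : ℚ) * s⟩ := rfl
@[simp] lemma Aff.one_def : (1 : Aff) = ⟨1, 0⟩ := rfl
@[simp] lemma Aff.mk_inv (u : ℚˣ) (r : ℚ) :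
    (⟨u, r⟩ : Aff)⁻¹ = ⟨u⁻¹, -((u⁻¹ : ℚˣ) : ℚ) * r⟩ := rfl

instance : Group Aff where
  mul_assoc x y z := by
    obtain ⟨u1, r1⟩ := x; obtain ⟨u2, r2⟩ := y; obtain ⟨u3, r3⟩ := z
    simp only [Aff.mk_mul]
    refine Aff.ext (mul_assoc _ _ _) ?_
    push_cast
    ring
  one_mul x := by
    obtain ⟨u1, r1⟩ := x
    simp only [Aff.one_def, Aff.mk_mul]
    exact Aff.ext (one_mul _) (by push_cast; ring)
  mul_one x := by
    obtain ⟨u1, r1⟩ := x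
    simp only [Aff.one_def, Aff.mk_mul]
    exact Aff.ext (mul_one _) (by push_cast; ring)
  inv_mul_cancel x := by
    obtain ⟨u1, r1⟩ := x
    simp only [Aff.one_def, Aff.mk_inv, Aff.mk_mul]
    refine Aff.ext (inv_mul_cancel _) ?_
    push_cast
    ring

namespace BS17
noncomputable section

def u₈ : ℚˣ := Units.mk0 (-8) (by norm_num)

@[simp] lemma u₈_val : ((u₈ : ℚˣ) : ℚ) = -8 := rfl
@[simp] lemma u₈_inv_val : ((u₈⁻¹ : ℚˣ) : ℚ) = (-8 : ℚ)⁻¹ := by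
  rw [← u₈_val, ← Units.val_inv_eq_inv_val]

/-- translations as a hom -/
def tr : Multiplicative ℚ →* Aff where
  toFun r := ⟨1, r.toAdd⟩
  map_one' := by simp only [Aff.one_def]; exact Aff.ext rfl (by simp)
  map_mul' x y := by
    simp only [Aff.mk_mul]
    exact Aff.ext (one_mul _).symm (by simp)

/-- scalings as a hom -/
def sc : ℚˣ →* Aff where
  toFun u := ⟨u, 0⟩
  map_one' := rfl
  map_mul' x y := by
    simp only [Aff.mk_mul]
    exact Aff.ext rfl (by simp)

lemma tr_zpow (m : ℤ) : (⟨1, (1:ℚ)⟩ : Aff) ^ m = ⟨1, (m:ℚ)⟩ := by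
  have h1 : (⟨1, (1:ℚ)⟩ : Aff) = tr (Multiplicative.ofAdd (1:ℚ)) := rfl
  rw [h1, ← MonoidHom.map_zpow, ← ofAdd_zsmul]
  exact Aff.ext rfl (by simp [tr])

lemma sc_zpow (u : ℚˣ) (j : ℤ) : (⟨u, (0:ℚ)⟩ : Aff) ^ j = ⟨u ^ j, (0:ℚ)⟩ := by
  have h1 : (⟨u, (0:ℚ)⟩ : Aff) = sc u := rfl
  rw [h1, ← MonoidHom.map_zpow]
  rfl

abbrev G := BS (-8)
def A : G := BSa (-8)
def B : G := BSb (-8)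

lemma rel : B * A * B⁻¹ = A ^ (-8:ℤ) := by
  have h : (FreeGroup.of true * FreeGroup.of false * (FreeGroup.of true)⁻¹ *
      (FreeGroup.of false) ^ (-(-8):ℤ)) ∈ Subgroup.normalClosure (BSrels (-8)) :=
    Subgroup.subset_normalClosure rfl
  have h2 := (QuotientGroup.eq_one_iff _).mpr h
  have h3 : B * A * B⁻¹ * A ^ (8:ℤ) = 1 := by
    simp [A, B, BSa, BSb, PresentedGroup.of, map_mul, map_zpow, PresentedGroup.mk] at h2 ⊢
    exact h2
  have h4 : B * A * B⁻¹ = (A ^ (8:ℤ))⁻¹ := mul_eq_one_iff_eq_inv.mp h3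
  rw [h4, ← zpow_neg]

lemma conj_zpow (m : ℤ) : B * A ^ m * B⁻¹ = A ^ (-8 * m) := by
  have h := MonoidHom.map_zpow (MulAut.conj B).toMonoidHom A m
  simp only [MulEquiv.toMonoidHom_eq_coe, MonoidHom.coe_coe, MulAut.conj_apply] at h
  rw [h, rel, ← zpow_mul]

lemma conj_pow (k : ℕ) (m : ℤ) : B ^ k * A ^ m * (B ^ k)⁻¹ = A ^ ((-8) ^ k * m) := by
  induction k with
  | zero => simp
  | succ n ih =>
    have h : B ^ (n+1) * A ^ m * (B ^ (n+1))⁻¹ = B * (B ^ n * A ^ m * (B ^ n)⁻¹) * B⁻¹ := by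
      group
    rw [h, ih, conj_zpow, show (-8 : ℤ) * ((-8) ^ n * m) = (-8) ^ (n+1) * m by ring]

lemma conj_pow' (k : ℕ) (m : ℤ) : (B ^ k)⁻¹ * A ^ ((-8) ^ k * m) * B ^ k = A ^ m := by
  rw [← conj_pow k m]; group

def P (g : G) : Prop := ∃ (k : ℕ) (m j : ℤ), g = (B ^ k)⁻¹ * A ^ m * B ^ j

lemma raise (k : ℕ) (m j : ℤ) (s : ℕ) :
    (B ^ k)⁻¹ * A ^ m * B ^ j = (B ^ (k + s))⁻¹ * A ^ ((-8) ^ s * m) * B ^ (j + s) := by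
  have h : (B ^ (k + s))⁻¹ * A ^ ((-8) ^ s * m) * B ^ (j + s)
      = (B ^ k)⁻¹ * ((B ^ s)⁻¹ * A ^ ((-8) ^ s * m) * B ^ s) * B ^ j := by
    rw [pow_add, zpow_add]
    group
  rw [h, conj_pow']

lemma P_mul {g h : G} (hg : P g) (hh : P h) : P (g * h) := by
  obtain ⟨k, m, j, rfl⟩ := hg
  obtain ⟨k', m', j', rfl⟩ := hh
  set s : ℕ := (k' - j).toNat with hs
  have hs' : (k' : ℤ) ≤ j + s := by
    have := Int.self_le_toNat (k' - j)
    omega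
  set t : ℕ := (j + s - k').toNat with htdef
  have ht : (t : ℤ) = j + s - k' := Int.toNat_of_nonneg (by omega)
  refine ⟨k + s, (-8) ^ s * m + (-8) ^ t * m', (t : ℤ) + j', ?_⟩
  rw [raise k m j s]
  have hB : (B : G) ^ (j + (s:ℤ)) * ((B : G) ^ k')⁻¹ = (B : G) ^ (t : ℤ) := by
    rw [← zpow_natCast B k', ← zpow_sub]
    congr 1
    omega
  have key : (B : G) ^ t * A ^ m' = A ^ ((-8) ^ t * m') * B ^ t := by
    rw [← conj_pow t m']; group
  calc (B ^ (k+s))⁻¹ * A ^ ((-8) ^ s * m) * B ^ (j + (s:ℤ)) * ((B ^ k')⁻¹ * A ^ m' * B ^ j')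
      = (B ^ (k+s))⁻¹ * A ^ ((-8) ^ s * m) * (B ^ (j + (s:ℤ)) * (B ^ k')⁻¹) * A ^ m' * B ^ j' := by
        group
    _ = (B ^ (k+s))⁻¹ * A ^ ((-8) ^ s * m) * (B ^ t * A ^ m') * B ^ j' := by
        rw [hB, zpow_natCast]; group
    _ = (B ^ (k+s))⁻¹ * A ^ ((-8) ^ s * m) * (A ^ ((-8) ^ t * m') * B ^ t) * B ^ j' := by
        rw [key]
    _ = (B ^ (k+s))⁻¹ * A ^ ((-8) ^ s * m + (-8) ^ t * m') * B ^ ((t:ℤ) + j') := by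
        rw [zpow_add, zpow_add]
        group

lemma P_inv {g : G} (hg : P g) : P g⁻¹ := by
  obtain ⟨k, m, j, rfl⟩ := hg
  by_cases hj : 0 ≤ j
  · refine ⟨j.toNat, -m, (k : ℤ), ?_⟩
    rw [← zpow_natCast B j.toNat, Int.toNat_of_nonneg hj]
    group
  · set s : ℕ := (-j).toNat with hs
    have hsj : (s : ℤ) = -j := Int.toNat_of_nonneg (by omega)
    refine ⟨0, (-8) ^ s * (-m), (s : ℤ) + k, ?_⟩
    have key : (B : G) ^ s * A ^ (-m) = A ^ ((-8) ^ s * (-m)) * B ^ s := by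
      rw [← conj_pow s (-m)]; group
    have hBj : ((B : G) ^ j)⁻¹ = B ^ (s : ℤ) := by
      rw [← zpow_neg, hsj]
    calc ((B ^ k)⁻¹ * A ^ m * B ^ j)⁻¹ = (B ^ j)⁻¹ * A ^ (-m) * B ^ (k:ℤ) := by group
      _ = B ^ (s:ℤ) * A ^ (-m) * B ^ (k:ℤ) := by rw [hBj]
      _ = (B ^ s) * A ^ (-m) * B ^ (k:ℤ) := by rw [zpow_natCast]
      _ = A ^ ((-8) ^ s * (-m)) * B ^ s * B ^ (k:ℤ) := by rw [key]
      _ = (B ^ (0:ℕ))⁻¹ * A ^ ((-8) ^ s * (-m)) * B ^ ((s:ℤ) + k) := by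
          rw [zpow_add, zpow_natCast]; group

lemma all_P (g : G) : P g := by
  let S : Subgroup G :=
    { carrier := {g | P g}
      one_mem' := ⟨0, 0, 0, by group⟩
      mul_mem' := fun hx hy => P_mul hx hy
      inv_mem' := fun hx => P_inv hx }
  refine PresentedGroup.generated_by (BSrels (-8)) S ?_ g
  intro j
  cases j
  · exact (⟨0, 1, 0, by group⟩ : P A)
  · exact (⟨0, 0, 1, by group⟩ : P B)

/-! the affine representation -/

def fgen : Bool → Aff
  | true => ⟨u₈, 0⟩
  | false => ⟨1, 1⟩

@[simp] lemma fgen_true : fgen true = ⟨u₈, 0⟩ := rfl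
@[simp] lemma fgen_false : fgen false = ⟨1, 1⟩ := rfl

lemma frels : ∀ r ∈ BSrels (-8), FreeGroup.lift fgen r = 1 := by
  intro r hr
  rcases hr with rfl
  simp only [map_mul, map_inv, map_zpow, FreeGroup.lift_apply_of, fgen_true, fgen_false]
  rw [show (-(-8):ℤ) = 8 by norm_num, tr_zpow]
  simp only [Aff.mk_mul, Aff.mk_inv, Aff.one_def]
  refine Aff.ext (by group) ?_
  push_cast
  norm_num

def φ : G →* Aff := PresentedGroup.toGroup frels

lemma φA : φ A = ⟨1, 1⟩ := PresentedGroup.toGroup.of frels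
lemma φB : φ B = ⟨u₈, 0⟩ := PresentedGroup.toGroup.of frels

lemma φ_nf (k : ℕ) (m j : ℤ) :
    φ ((B ^ k)⁻¹ * A ^ m * B ^ j) = ⟨u₈ ^ (j - k), ((u₈ ^ (-(k:ℤ)) : ℚˣ) : ℚ) * m⟩ := by
  rw [map_mul, map_mul, map_inv, map_pow, map_zpow, map_zpow, φA, φB]
  rw [← zpow_natCast (⟨u₈, (0:ℚ)⟩ : Aff) k, sc_zpow, sc_zpow, tr_zpow]
  simp only [Aff.mk_inv, Aff.mk_mul]
  refine Aff.ext ?_ ?_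
  · show (u₈ ^ (k:ℤ))⁻¹ * 1 * u₈ ^ j = u₈ ^ (j - (k:ℤ))
    rw [mul_one, ← zpow_neg, ← zpow_add]
    congr 1
    ring
  · show -(((u₈ ^ (k:ℤ))⁻¹ : ℚˣ):ℚ) * 0 + (((u₈ ^ (k:ℤ))⁻¹ : ℚˣ):ℚ) * (m:ℚ)
        + (((u₈ ^ (k:ℤ))⁻¹ * 1 : ℚˣ):ℚ) * 0 = ((u₈ ^ (-(k:ℤ)) : ℚˣ) : ℚ) * m
    rw [← zpow_neg]
    ring

lemma u₈_zpow_eq_one {d : ℤ} (h : u₈ ^ d = 1) : d = 0 := by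
  have h1 : ((u₈ ^ d : ℚˣ) : ℚ) = 1 := by rw [h]; rfl
  rw [Units.val_zpow_eq_zpow_val, u₈_val] at h1
  have h2 : |(-8:ℚ)| ^ d = 1 := by
    have h2' : |(-8:ℚ) ^ d| = |(-8:ℚ)| ^ d := map_zpow₀ (absHom : ℚ →*₀ ℚ) _ _
    rw [← h2', h1]
    norm_num
  have h3 : (8:ℚ) ^ d = (8:ℚ) ^ (0:ℤ) := by
    rw [show |(-8:ℚ)| = 8 by norm_num] at h2
    rw [h2]
    norm_num
  exact zpow_right_injective₀ (by norm_num) (by norm_num) h3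

lemma finord {L : Type*} [Group L] {x : L} {m : ℤ} (hm : m ≠ 0) (h : x ^ m = 1) :
    IsOfFinOrder x := by
  have hnat : x ^ ((m.natAbs : ℤ)) = 1 := by
    rcases Int.natAbs_eq m with h' | h'
    · rw [← h']; exact h
    · rw [show ((m.natAbs : ℤ)) = -m by omega, zpow_neg, h, inv_one]
  refine isOfFinOrder_iff_pow_eq_one.mpr ⟨m.natAbs, by omega, ?_⟩
  rw [← zpow_natCast]
  exact hnat

lemma pik {L : Type*} [Group L] (π : G →* L) (k : ℕ) (m : ℤ)
    (h : π ((B ^ k)⁻¹ * A ^ m * B ^ (k:ℤ)) = 1) : π A ^ m = 1 := by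
  simp only [map_mul, map_inv, map_pow, map_zpow] at h
  have h3 : π A ^ m = π B ^ k * ((π B ^ k)⁻¹ * π A ^ m * π B ^ ((k:ℤ))) * (π B ^ ((k:ℤ)))⁻¹ := by
    group
  rw [h3, h]
  group

end
end BS17

theorem stmt17 {L : Type*} [Group L] (π : BS (-8) →* L)
    (hsurj : Function.Surjective π)
    (ha : ¬IsOfFinOrder (π (BSa (-8)))) (hb : ¬IsOfFinOrder (π (BSb (-8)))) :
    Nonempty (L ≃* BS (-8)) := by
  open BS17 in
  have haA : ¬IsOfFinOrder (π A) := ha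
  have hbB : ¬IsOfFinOrder (π B) := hb
  have inj : Function.Injective π := by
    rw [injective_iff_map_eq_one]
    intro g hg
    obtain ⟨k, m, j, rfl⟩ := all_P g
    by_cases hm : m = 0
    · subst hm
      have hform : ((B:G) ^ k)⁻¹ * A ^ (0:ℤ) * B ^ j = B ^ (j - (k:ℤ)) := by
        rw [zpow_zero, mul_one]
        group
      by_cases hjk : j = (k:ℤ)
      · rw [hform, hjk, sub_self, zpow_zero]
      · exfalso
        apply hbB
        refine finord (show j - (k:ℤ) ≠ 0 by omega) ?_
        rw [← map_zpow, ← hform]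
        exact hg
    · by_cases hjk : j = (k:ℤ)
      · exfalso
        rw [hjk] at hg
        exact haA (finord hm (pik π k m hg))
      · exfalso
        set g : G := (B ^ k)⁻¹ * A ^ m * B ^ j with hgdef
        set c : G := g * A * g⁻¹ * A⁻¹ with hcdef
        have hπc : π c = 1 := by
          rw [hcdef, map_mul, map_mul, map_mul, map_inv, map_inv, hg]
          group
        obtain ⟨k', m', j', hcnf⟩ := all_P c
        have hφg : φ g = ⟨u₈ ^ (j - k), ((u₈ ^ (-(k:ℤ)) : ℚˣ) : ℚ) * m⟩ := φ_nf k m j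
        have hφc : φ c = ⟨1, ((u₈ ^ (j - (k:ℤ)) : ℚˣ) : ℚ) - 1⟩ := by
          rw [hcdef, map_mul, map_mul, map_mul, map_inv, map_inv, hφg, φA]
          set u : ℚˣ := u₈ ^ (j - (k:ℤ)) with hu
          set r : ℚ := ((u₈ ^ (-(k:ℤ)) : ℚˣ) : ℚ) * m with hr
          simp only [Aff.mk_inv, Aff.mk_mul]
          refine Aff.ext (by group) ?_
          show r + (u:ℚ) * 1 + ((u * 1 : ℚˣ):ℚ) * (-((u⁻¹:ℚˣ):ℚ) * r)
              + ((u * 1 * u⁻¹ : ℚˣ):ℚ) * (-((1⁻¹:ℚˣ):ℚ) * 1) = (u:ℚ) - 1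
          push_cast
          field_simp
          ring
        have heq : (⟨u₈ ^ (j' - (k':ℤ)), ((u₈ ^ (-(k':ℤ)):ℚˣ):ℚ) * m'⟩ : Aff)
            = ⟨1, ((u₈ ^ (j - (k:ℤ)) : ℚˣ):ℚ) - 1⟩ := by
          rw [← φ_nf k' m' j', ← hcnf, hφc]
        have e1 : u₈ ^ (j' - (k':ℤ)) = 1 := congrArg Aff.u heq
        have e2 : ((u₈ ^ (-(k':ℤ)):ℚˣ):ℚ) * m' = ((u₈ ^ (j - (k:ℤ)) : ℚˣ):ℚ) - 1 :=
          congrArg Aff.r heq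
        have hj'k' : j' = (k':ℤ) := by
          have := u₈_zpow_eq_one e1
          omega
        have hne : ((u₈ ^ (j - (k:ℤ)) : ℚˣ):ℚ) - 1 ≠ 0 := by
          intro h'
          have hval : ((u₈ ^ (j - (k:ℤ)) : ℚˣ):ℚ) = 1 := by linarith [h']
          have : u₈ ^ (j - (k:ℤ)) = 1 := Units.val_eq_one.mp hval
          have := u₈_zpow_eq_one this
          omega
        have hm' : m' ≠ 0 := by
          rintro rfl
          rw [Int.cast_zero, mul_zero] at e2
          exact hne e2.symm
        rw [hj'k'] at hcnf
        have hfin : π A ^ m' = 1 := pik π k' m' (by rw [← hcnf]; exact hπc)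
        exact haA (finord hm' hfin)
  exact ⟨(MulEquiv.ofBijective π ⟨inj, hsurj⟩).symm⟩
end

section
/- Let n ≥ 2 and let G be the cyclically presented group G_n(m,k) with m ≡ 0 (mod n), i.e. G = ⟨x_0,…,x_{n−1} ∣ x_i·x_i = x_{i+k} (indices mod n)⟩ with gcd(n,k) = 1. Then G is cyclic of order 2^n − 1. -/
/-!
Iterating `x_i² = x_{i+k}` gives `x_{jk} = x_0 ^ 2 ^ j`. Since `k` is invertible mod `n`, every
generator is a power of `x_0`, and `j = n` gives `x_0 = x_0 ^ 2 ^ n`, so the order of `x_0`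
divides `2 ^ n - 1`. Conversely `x_i ↦ 2 ^ (i k⁻¹)` respects the relations in `ℤ/(2 ^ n - 1)`,
because `2 ^ n = 1` there, and sends `x_0` to the generator `1`.
-/

/-- Relators of the cyclically presented group
`G_n(0,k) = ⟨x_0,…,x_{n−1} ∣ x_i x_i = x_{i+k}⟩` (indices mod n). -/
def cycRels (n k : ℕ) : Set (FreeGroup (ZMod n)) :=
  {r | ∃ i : ZMod n, r = FreeGroup.of i * FreeGroup.of i * (FreeGroup.of (i + (k : ZMod n)))⁻¹}

/-- The cyclically presented group G_n(0,k) with relations x_i² = x_{i+k}. -/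
def cycGroup (n k : ℕ) : Type := PresentedGroup (cycRels n k)

instance (n k : ℕ) : Group (cycGroup n k) := by unfold cycGroup; infer_instance

namespace ZMod

theorem two_pow_eq_two_pow_mod (n a : ℕ) : (2 : ZMod (2 ^ n - 1)) ^ a = 2 ^ (a % n) := by
  have two_pow_n : (2 : ZMod (2 ^ n - 1)) ^ n = 1 := by
    have h : ((2 ^ n - 1 : ℕ) : ZMod (2 ^ n - 1)) = 0 := natCast_self _
    rw [Nat.cast_sub Nat.one_le_two_pow, sub_eq_zero] at h
    exact_mod_cast h
  conv_lhs => rw [← Nat.div_add_mod a n, pow_add, pow_mul, two_pow_n, one_pow, one_mul]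

theorem two_pow_val_add_one {n : ℕ} [NeZero n] (a : ZMod n) :
    (2 : ZMod (2 ^ n - 1)) ^ (a + 1).val = 2 * 2 ^ a.val := by
  rw [val_add, val_one_eq_one_mod, ← two_pow_eq_two_pow_mod, pow_add, ← two_pow_eq_two_pow_mod,
    pow_one, mul_comm]

end ZMod

namespace cycGroup

variable {n k : ℕ}

def of (i : ZMod n) : cycGroup n k := PresentedGroup.of i

theorem of_mul_self (i : ZMod n) : (of i * of i : cycGroup n k) = of (i + (k : ZMod n)) :=
  PresentedGroup.mk_eq_mk_of_mul_inv_mem ⟨i, rfl⟩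

theorem of_natCast_mul (j : ℕ) : (of ((j * k : ℕ) : ZMod n) : cycGroup n k) = of 0 ^ 2 ^ j := by
  induction j with
  | zero => simp
  | succ j ih =>
    rw [Nat.succ_mul, Nat.cast_add, ← of_mul_self, ih, ← pow_add, pow_succ, mul_two]

theorem of_zero_pow_two_pow_sub_one : (of 0 : cycGroup n k) ^ (2 ^ n - 1) = 1 := by
  have h : (of 0 : cycGroup n k) = of 0 ^ 2 ^ n := by
    rw [← of_natCast_mul, Nat.cast_mul, ZMod.natCast_self, zero_mul]
  refine mul_right_cancel (b := of 0) ?_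
  rw [← pow_succ, Nat.sub_add_cancel Nat.one_le_two_pow, one_mul, ← h]

theorem mem_zpowers_of_zero [NeZero n] (hnk : n.Coprime k) (x : cycGroup n k) :
    x ∈ Subgroup.zpowers (of 0) := by
  refine PresentedGroup.generated_by _ _ (fun i ↦ ?_) x
  have hi : (((i * (k : ZMod n)⁻¹).val * k : ℕ) : ZMod n) = i := by
    rw [Nat.cast_mul, ZMod.natCast_zmod_val, mul_assoc, mul_comm _ (k : ZMod n),
      ZMod.coe_mul_inv_eq_one k hnk.symm, mul_one]
  change of i ∈ _
  rw [← hi, of_natCast_mul]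
  exact Subgroup.npow_mem_zpowers _ _

def toZMod [NeZero n] (hnk : n.Coprime k) : cycGroup n k →* Multiplicative (ZMod (2 ^ n - 1)) :=
  PresentedGroup.toGroup (f := fun i ↦ .ofAdd (2 ^ (i * (k : ZMod n)⁻¹).val)) <| by
    rintro r ⟨i, rfl⟩
    have hk : (k : ZMod n) * (k : ZMod n)⁻¹ = 1 := ZMod.coe_mul_inv_eq_one k hnk.symm
    simp only [map_mul, map_inv, FreeGroup.lift_apply_of, mul_inv_eq_one, ← ofAdd_add, add_mul,
      hk, ZMod.two_pow_val_add_one, two_mul]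

theorem toZMod_of_zero [NeZero n] (hnk : n.Coprime k) :
    toZMod hnk (of 0) = .ofAdd (1 : ZMod (2 ^ n - 1)) :=
  (PresentedGroup.toGroup.of _).trans (by simp)

theorem orderOf_of_zero [NeZero n] (hnk : n.Coprime k) :
    orderOf (of 0 : cycGroup n k) = 2 ^ n - 1 := by
  refine Nat.dvd_antisymm (orderOf_dvd_of_pow_eq_one of_zero_pow_two_pow_sub_one) ?_
  simpa [toZMod_of_zero, orderOf_ofAdd_eq_addOrderOf] using orderOf_map_dvd (toZMod hnk) (of 0)

end cycGroup

theorem stmt19 (n k : ℕ) (hn : 2 ≤ n) (hnk : Nat.gcd n k = 1) :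
    IsCyclic (cycGroup n k) ∧ Nat.card (cycGroup n k) = 2 ^ n - 1 := by
  have : NeZero n := ⟨by omega⟩
  have hgen := cycGroup.mem_zpowers_of_zero (k := k) hnk
  refine ⟨⟨_, hgen⟩, ?_⟩
  rw [← orderOf_eq_card_of_forall_mem_zpowers hgen, cycGroup.orderOf_of_zero hnk]
end
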